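/- arXiv:2308.06356 — 4 statements merged into one kernel-verified Lean document; each statement's English description precedes it below -/
import Mathlib

section
/- If there exist a bounded function u : X → ℝ and a constant c₀ ∈ ℝ with u = T⁻u + c₀, then for every bounded function v : X → ℝ, the sequence (T⁻)ⁿv / n converges uniformly to −c₀ as n → ∞; in fact ‖(T⁻)ⁿv + n·c₀‖_∞ ≤ ‖u − v‖_∞ + ‖u‖_∞ for all n. -/
/-- The (negative) Lax–Oleinik operator. -/
noncomputable def Tminus {X : Type*} (c : X × X → ℝ) (f : X → ℝ) : X → ℝ :=
  fun x => ⨅ y, (f y + c (y, x))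

/-!
On functions bounded below, `T⁻` is monotone and commutes with adding constants, so a solution
of `u = T⁻u + c₀` has the explicit iterates `(T⁻)ⁿ(u + k) = u + k - n c₀`. With
`S = sup |u - v|`, the sandwich `u - S ≤ v ≤ u + S` is therefore carried by `(T⁻)ⁿ` to
`|(T⁻)ⁿv + n c₀ - u| ≤ S`; dividing by `n` gives the uniform limit `-c₀`.
-/

open Set Filter

namespace Tminus

variable {X : Type*} {c : X × X → ℝ} {f g u : X → ℝ}

lemma bddBelow_range_add_cost (hc : BddBelow (range c)) (hf : BddBelow (range f)) (x : X) :
    BddBelow (range fun y => f y + c (y, x)) := by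
  obtain ⟨a, ha⟩ := hf
  obtain ⟨b, hb⟩ := hc
  exact ⟨a + b, by rintro _ ⟨y, rfl⟩; exact add_le_add (ha ⟨y, rfl⟩) (hb ⟨(y, x), rfl⟩)⟩

lemma le_add_cost (hc : BddBelow (range c)) (hf : BddBelow (range f)) (y x : X) :
    Tminus c f x ≤ f y + c (y, x) :=
  ciInf_le (bddBelow_range_add_cost hc hf x) y

variable [Nonempty X]

lemma bddBelow_range (hc : BddBelow (range c)) (hf : BddBelow (range f)) :
    BddBelow (range (Tminus c f)) := by
  obtain ⟨a, ha⟩ := hf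
  obtain ⟨b, hb⟩ := hc
  refine ⟨a + b, ?_⟩
  rintro _ ⟨x, rfl⟩
  exact le_ciInf fun y => add_le_add (ha ⟨y, rfl⟩) (hb ⟨(y, x), rfl⟩)

lemma mono (hc : BddBelow (range c)) (hf : BddBelow (range f)) (hfg : f ≤ g) :
    Tminus c f ≤ Tminus c g := fun x =>
  le_ciInf fun y => (le_add_cost hc hf y x).trans (add_le_add_left (hfg y) _)

lemma iterate_mono (hc : BddBelow (range c)) (hf : BddBelow (range f)) (hfg : f ≤ g) (n : ℕ) :
    (Tminus c)^[n] f ≤ (Tminus c)^[n] g := by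
  induction n generalizing f g with
  | zero => exact hfg
  | succ n ih =>
    rw [Function.iterate_succ_apply, Function.iterate_succ_apply]
    exact ih (bddBelow_range hc hf) (mono hc hf hfg)

lemma add_const (hc : BddBelow (range c)) (hf : BddBelow (range f)) (k : ℝ) :
    Tminus c (fun y => f y + k) = fun x => Tminus c f x + k := by
  funext x
  simp only [Tminus, ciInf_add (bddBelow_range_add_cost hc hf x), add_right_comm]

lemma iterate_add_const_of_eq_add (hc : BddBelow (range c)) (hu : BddBelow (range u))
    {c₀ : ℝ} (hfix : ∀ x, u x = Tminus c u x + c₀) (k : ℝ) (n : ℕ) :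
    (Tminus c)^[n] (fun x => u x + k) = fun x => u x + (k - n * c₀) := by
  induction n with
  | zero => simp
  | succ n ih =>
    rw [Function.iterate_succ_apply', ih, add_const hc hu]
    funext x
    rw [hfix x]
    push_cast
    ring

lemma abs_iterate_add_mul_sub_le (hc : BddBelow (range c)) (hu : BddBelow (range u))
    {c₀ S : ℝ} (hfix : ∀ x, u x = Tminus c u x + c₀) (hS : ∀ x, |u x - f x| ≤ S) (n : ℕ) (x : X) :
    |(Tminus c)^[n] f x + n * c₀ - u x| ≤ S := by
  have hlow : (fun x => u x + -S) ≤ f := fun x => by linarith [(abs_le.1 (hS x)).2]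
  have hup : f ≤ fun x => u x + S := fun x => by linarith [(abs_le.1 (hS x)).1]
  have hlow_bdd : BddBelow (range fun x => u x + -S) := hu.range_comp_left add_left_mono
  have h₁ := iterate_mono hc hlow_bdd hlow n x
  have h₂ := iterate_mono hc (hlow_bdd.range_mono _ hlow) hup n x
  rw [iterate_add_const_of_eq_add hc hu hfix] at h₁ h₂
  rw [abs_le]
  constructor <;> linarith

end Tminus

lemma bddAbove_range_abs_sub {X : Type*} {u v : X → ℝ} (hu : ∃ M, ∀ x, |u x| ≤ M)
    (hv : ∃ M, ∀ x, |v x| ≤ M) : BddAbove (range fun x => |u x - v x|) := by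
  obtain ⟨Mu, hMu⟩ := hu
  obtain ⟨Mv, hMv⟩ := hv
  refine ⟨Mu + Mv, ?_⟩
  rintro _ ⟨x, rfl⟩
  exact (abs_sub _ _).trans (add_le_add (hMu x) (hMv x))

lemma tendstoUniformly_div_of_abs_add_mul_le {X : Type*} {F : ℕ → X → ℝ} {a C : ℝ}
    (hF : ∀ n x, |F n x + n * a| ≤ C) :
    TendstoUniformly (fun n x => F n x / n) (fun _ => -a) atTop := by
  rw [Metric.tendstoUniformly_iff]
  intro ε hε
  filter_upwards [(tendsto_const_div_atTop_nhds_zero_nat C).eventually (gt_mem_nhds hε),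
    eventually_gt_atTop 0] with n hCn hn x
  have hn' : (0 : ℝ) < n := Nat.cast_pos.2 hn
  have hdiff : -a - F n x / n = -((F n x + n * a) / n) := by field_simp; ring
  calc dist (-a) (F n x / n) = |F n x + n * a| / n := by
        rw [Real.dist_eq, hdiff, abs_neg, abs_div, abs_of_pos hn']
    _ ≤ C / n := by gcongr; exact hF n x
    _ < ε := hCn

theorem stmt2 {X : Type*} [MetricSpace X] [CompactSpace X] [Nonempty X]
    (c : X × X → ℝ) (hc : Continuous c) (c₀ : ℝ)
    (u : X → ℝ) (hu_bdd : ∃ M, ∀ x, |u x| ≤ M)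
    (hu : ∀ x, u x = Tminus c u x + c₀)
    (v : X → ℝ) (hv_bdd : ∃ M, ∀ x, |v x| ≤ M) :
    (∀ n : ℕ, ∀ x : X,
        |(Tminus c)^[n] v x + n * c₀| ≤ (⨆ x, |u x - v x|) + ⨆ x, |u x|) ∧
    TendstoUniformly (fun (n : ℕ) (x : X) => (Tminus c)^[n] v x / n)
      (fun _ => -c₀) Filter.atTop := by
  have hc_bdd : BddBelow (range c) := (isCompact_range hc).bddBelow
  have hu_abs : BddAbove (range fun x => |u x|) :=
    hu_bdd.imp fun M hM => by rintro _ ⟨x, rfl⟩; exact hM x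
  have hu_below : BddBelow (range u) :=
    let ⟨M, hM⟩ := hu_bdd; ⟨-M, by rintro _ ⟨x, rfl⟩; exact neg_le_of_abs_le (hM x)⟩
  have hbound (n : ℕ) (x : X) :
      |(Tminus c)^[n] v x + n * c₀| ≤ (⨆ x, |u x - v x|) + ⨆ x, |u x| :=
    calc |(Tminus c)^[n] v x + n * c₀|
        ≤ |(Tminus c)^[n] v x + n * c₀ - u x| + |u x| := by
          simpa using abs_add_le ((Tminus c)^[n] v x + n * c₀ - u x) (u x)
      _ ≤ (⨆ x, |u x - v x|) + ⨆ x, |u x| := add_le_add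
          (Tminus.abs_iterate_add_mul_sub_le hc_bdd hu_below hu
            (le_ciSup (bddAbove_range_abs_sub hu_bdd hv_bdd)) n x)
          (le_ciSup hu_abs x)
  exact ⟨hbound, tendstoUniformly_div_of_abs_add_mul_le hbound⟩
end

section
/- The critical constant is unique: if u₁ = T⁻u₁ + c₁ and u₂ = T⁻u₂ + c₂ for bounded functions u₁, u₂ : X → ℝ and constants c₁, c₂ ∈ ℝ, then c₁ = c₂. -/
open Set

lemma bddBelow_range_add_cost {X : Type*} {c : X × X → ℝ} {f : X → ℝ}
    (hc : BddBelow (range c)) (hf : BddBelow (range f)) (x : X) :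
    BddBelow (range fun y => f y + c (y, x)) := by
  obtain ⟨a, ha⟩ := hf
  obtain ⟨b, hb⟩ := hc
  exact ⟨a + b, by rintro _ ⟨y, rfl⟩; exact add_le_add (ha ⟨y, rfl⟩) (hb ⟨(y, x), rfl⟩)⟩

lemma Tminus_le_add_of_le_add {X : Type*} [Nonempty X] {c : X × X → ℝ} {f g : X → ℝ} {K : ℝ}
    (hc : BddBelow (range c)) (hf : BddBelow (range f)) (hfg : ∀ y, f y ≤ g y + K) (x : X) :
    Tminus c f x ≤ Tminus c g x + K := by
  have hle : ∀ y, Tminus c f x - K ≤ g y + c (y, x) := fun y => by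
    have : Tminus c f x ≤ f y + c (y, x) := ciInf_le (bddBelow_range_add_cost hc hf x) y
    linarith [hfg y]
  have : Tminus c f x - K ≤ Tminus c g x := le_ciInf hle
  linarith

lemma const_le_of_eq_Tminus_add {X : Type*} [Nonempty X] {c : X × X → ℝ} {u₁ u₂ : X → ℝ}
    {c₁ c₂ : ℝ} (hc : BddBelow (range c)) (hu₁ : BddBelow (range u₁))
    (hsub : BddAbove (range (u₁ - u₂)))
    (h₁ : ∀ x, u₁ x = Tminus c u₁ x + c₁) (h₂ : ∀ x, u₂ x = Tminus c u₂ x + c₂) :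
    c₂ ≤ c₁ := by
  set s := ⨆ y, (u₁ - u₂) y
  have hu₁_le : ∀ y, u₁ y ≤ u₂ y + s := fun y => by
    have := le_ciSup hsub y
    simp only [Pi.sub_apply] at this
    linarith
  have hsub_le : ∀ x, (u₁ - u₂) x ≤ s + (c₁ - c₂) := fun x => by
    have := Tminus_le_add_of_le_add hc hu₁ hu₁_le x
    simp only [Pi.sub_apply]
    linarith [h₁ x, h₂ x]
  linarith [ciSup_le hsub_le]

lemma bddBelow_range_of_abs_le {X : Type*} {u : X → ℝ} {M : ℝ} (hu : ∀ x, |u x| ≤ M) :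
    BddBelow (range u) :=
  ⟨-M, by rintro _ ⟨x, rfl⟩; exact neg_le_of_abs_le (hu x)⟩

lemma bddAbove_range_sub_of_abs_le {X : Type*} {u v : X → ℝ} {M N : ℝ}
    (hu : ∀ x, |u x| ≤ M) (hv : ∀ x, |v x| ≤ N) : BddAbove (range (u - v)) :=
  ⟨M + N, by
    rintro _ ⟨x, rfl⟩
    linarith [le_of_abs_le (hu x), neg_le_of_abs_le (hv x), Pi.sub_apply u v x]⟩

theorem stmt3 {X : Type*} [MetricSpace X] [CompactSpace X] [Nonempty X]
    (c : X × X → ℝ) (hc : Continuous c)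
    (u₁ u₂ : X → ℝ) (hu₁_bdd : ∃ M, ∀ x, |u₁ x| ≤ M) (hu₂_bdd : ∃ M, ∀ x, |u₂ x| ≤ M)
    (c₁ c₂ : ℝ)
    (h₁ : ∀ x, u₁ x = Tminus c u₁ x + c₁)
    (h₂ : ∀ x, u₂ x = Tminus c u₂ x + c₂) :
    c₁ = c₂ := by
  obtain ⟨M₁, hM₁⟩ := hu₁_bdd
  obtain ⟨M₂, hM₂⟩ := hu₂_bdd
  have hc_bdd : BddBelow (range c) := (isCompact_range hc).bddBelow
  exact le_antisymm
    (const_le_of_eq_Tminus_add hc_bdd (bddBelow_range_of_abs_le hM₂)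
      (bddAbove_range_sub_of_abs_le hM₂ hM₁) h₂ h₁)
    (const_le_of_eq_Tminus_add hc_bdd (bddBelow_range_of_abs_le hM₁)
      (bddAbove_range_sub_of_abs_le hM₁ hM₂) h₁ h₂)
end

section
/- Pointwise infimum of weak KAM solutions is a weak KAM solution: if (u_α)_{α ∈ A} is a family of functions each satisfying u_α = T⁻u_α + c₀, and the pointwise infimum u := inf_α u_α is real-valued, then u = T⁻u + c₀; similarly, a pointwise infimum (resp. supremum) of c₀-subsolutions, when well-defined, is a c₀-subsolution. -/
open Set Bornology

section LaxOleinik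

variable {X : Type*} {c : X × X → ℝ} {c₀ : ℝ}

def IsSubsolution (c : X × X → ℝ) (c₀ : ℝ) (u : X → ℝ) : Prop :=
  ∀ x y, u y - u x ≤ c (x, y) + c₀

def IsWeakKAMSolution (c : X × X → ℝ) (c₀ : ℝ) (u : X → ℝ) : Prop :=
  ∀ x, u x = Tminus c u x + c₀

theorem Tminus_apply (f : X → ℝ) (x : X) : Tminus c f x = ⨅ y, (f y + c (y, x)) := rfl

theorem Tminus_mono {f g : X → ℝ} {x : X} (hfg : f ≤ g)
    (hf : BddBelow (range fun y => f y + c (y, x))) : Tminus c f x ≤ Tminus c g x :=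
  have : Nonempty X := ⟨x⟩
  ciInf_mono hf fun y => by linarith [hfg y]

theorem bddBelow_range_add_cost_iff (hc : IsBounded (range c)) (f : X → ℝ) (x : X) :
    BddBelow (range fun y => f y + c (y, x)) ↔ BddBelow (range f) := by
  obtain ⟨m, hm⟩ := hc.bddBelow
  obtain ⟨M, hM⟩ := hc.bddAbove
  constructor
  · rintro ⟨b, hb⟩
    refine ⟨b - M, ?_⟩
    rintro _ ⟨y, rfl⟩
    linarith [hb ⟨y, rfl⟩, hM ⟨(y, x), rfl⟩]
  · rintro ⟨b, hb⟩
    refine ⟨b + m, ?_⟩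
    rintro _ ⟨y, rfl⟩
    linarith [hb ⟨y, rfl⟩, hm ⟨(y, x), rfl⟩]

namespace IsSubsolution

variable {u : X → ℝ}

theorem bddBelow_range_add (hu : IsSubsolution c c₀ u) (x : X) :
    BddBelow (range fun y => u y + c (y, x)) := by
  refine ⟨u x - c₀, ?_⟩
  rintro _ ⟨y, rfl⟩
  linarith [hu y x]

theorem le_Tminus_add (hu : IsSubsolution c c₀ u) (x : X) : u x ≤ Tminus c u x + c₀ := by
  have : Nonempty X := ⟨x⟩
  have : u x - c₀ ≤ Tminus c u x := le_ciInf fun y => by linarith [hu y x]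
  linarith

theorem iInf {A : Type*} [Nonempty A] {u : A → X → ℝ} (hu : ∀ α, IsSubsolution c c₀ (u α))
    (hb : ∀ x, BddBelow (range fun α => u α x)) : IsSubsolution c c₀ fun x => ⨅ α, u α x := by
  intro x y
  have : (⨅ α, u α y) - c (x, y) - c₀ ≤ ⨅ α, u α x :=
    le_ciInf fun α => by linarith [hu α x y, ciInf_le (hb y) α]
  linarith

theorem iSup {A : Type*} [Nonempty A] {u : A → X → ℝ} (hu : ∀ α, IsSubsolution c c₀ (u α))
    (hb : ∀ x, BddAbove (range fun α => u α x)) : IsSubsolution c c₀ fun x => ⨆ α, u α x := by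
  intro x y
  have : (⨆ α, u α y) ≤ (⨆ α, u α x) + c (x, y) + c₀ :=
    ciSup_le fun α => by linarith [hu α x y, le_ciSup (hb x) α]
  linarith

end IsSubsolution

namespace IsWeakKAMSolution

variable {u : X → ℝ}

theorem bddBelow_range (hc : IsBounded (range c)) (hu : IsWeakKAMSolution c c₀ u) :
    BddBelow (range u) := by
  by_contra hunb
  have hconst : ∀ x, u x = c₀ := fun x => by
    rw [hu x, Tminus_apply,
      Real.iInf_of_not_bddBelow ((bddBelow_range_add_cost_iff hc u x).not.mpr hunb), zero_add]
  exact hunb ⟨c₀, by rintro _ ⟨x, rfl⟩; exact (hconst x).ge⟩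

theorem isSubsolution (hc : IsBounded (range c)) (hu : IsWeakKAMSolution c c₀ u) :
    IsSubsolution c c₀ u := by
  intro x y
  have hb := (bddBelow_range_add_cost_iff hc u y).mpr (hu.bddBelow_range hc)
  have : Tminus c u y ≤ u x + c (x, y) := ciInf_le hb x
  linarith [hu y]

theorem iInf {A : Type*} [Nonempty A] {u : A → X → ℝ} (hc : IsBounded (range c))
    (hu : ∀ α, IsWeakKAMSolution c c₀ (u α)) (hb : ∀ x, BddBelow (range fun α => u α x)) :
    IsWeakKAMSolution c c₀ fun x => ⨅ α, u α x := by
  have hv := IsSubsolution.iInf (fun α => (hu α).isSubsolution hc) hb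
  intro x
  refine le_antisymm (hv.le_Tminus_add x) (le_ciInf fun α => ?_)
  calc Tminus c (fun x => ⨅ α, u α x) x + c₀ ≤ Tminus c (u α) x + c₀ := by
        gcongr
        exact Tminus_mono (fun y => ciInf_le (hb y) α) (hv.bddBelow_range_add x)
    _ = u α x := (hu α x).symm

end IsWeakKAMSolution

end LaxOleinik

theorem stmt11_general {X : Type*} [MetricSpace X] [CompactSpace X]
    (c : X × X → ℝ) (hc : Continuous c) (c₀ : ℝ)
    (A : Type*) [Nonempty A] :
    (∀ u : A → X → ℝ,
        (∀ α, ∀ x, u α x = Tminus c (u α) x + c₀) →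
        (∀ x, BddBelow (Set.range fun α => u α x)) →
        ∀ x, (⨅ α, u α x) = Tminus c (fun x' => ⨅ α, u α x') x + c₀) ∧
    (∀ u : A → X → ℝ,
        (∀ α, ∀ x y : X, u α y - u α x ≤ c (x, y) + c₀) →
        (∀ x, BddBelow (Set.range fun α => u α x)) →
        ∀ x y : X, (⨅ α, u α y) - (⨅ α, u α x) ≤ c (x, y) + c₀) ∧
    (∀ u : A → X → ℝ,
        (∀ α, ∀ x y : X, u α y - u α x ≤ c (x, y) + c₀) →
        (∀ x, BddAbove (Set.range fun α => u α x)) →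
        ∀ x y : X, (⨆ α, u α y) - (⨆ α, u α x) ≤ c (x, y) + c₀) :=
  have hcb : IsBounded (range c) := (isCompact_range hc).isBounded
  ⟨fun _ hu hb => IsWeakKAMSolution.iInf hcb hu hb,
    fun _ hu hb => IsSubsolution.iInf hu hb,
    fun _ hu hb => IsSubsolution.iSup hu hb⟩

theorem stmt11 {X : Type*} [MetricSpace X] [CompactSpace X] [Nonempty X]
    (c : X × X → ℝ) (hc : Continuous c) (c₀ : ℝ)
    (A : Type*) [Nonempty A] :
    (∀ u : A → X → ℝ,
        (∀ α, ∀ x, u α x = Tminus c (u α) x + c₀) →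
        (∀ x, BddBelow (Set.range fun α => u α x)) →
        ∀ x, (⨅ α, u α x) = Tminus c (fun x' => ⨅ α, u α x') x + c₀) ∧
    (∀ u : A → X → ℝ,
        (∀ α, ∀ x y : X, u α y - u α x ≤ c (x, y) + c₀) →
        (∀ x, BddBelow (Set.range fun α => u α x)) →
        ∀ x y : X, (⨅ α, u α y) - (⨅ α, u α x) ≤ c (x, y) + c₀) ∧
    (∀ u : A → X → ℝ,
        (∀ α, ∀ x y : X, u α y - u α x ≤ c (x, y) + c₀) →
        (∀ x, BddAbove (Set.range fun α => u α x)) →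
        ∀ x y : X, (⨆ α, u α y) - (⨆ α, u α x) ≤ c (x, y) + c₀) :=
  stmt11_general c hc c₀ A
end

section
/- Aubry–Le Daeron fundamental crossing lemma: let S : ℝ² → ℝ be C² with ∂²S/∂x∂y (p, q) < 0 for all (p,q). If (x − x')(y − y') < 0, then S(x, y) + S(x', y') > S(x, y') + S(x', y). -/
/-! If `∂²S/∂x∂y < 0`, then `p ↦ ∂S/∂y (p, q)` is strictly decreasing, so for `x < x'` the
difference `q ↦ S(x, q) - S(x', q)` has positive derivative and is strictly increasing.
Comparing it at `y' < y` gives the crossing inequality; the other sign pattern is symmetric. -/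

section Crossing

variable {S : ℝ → ℝ → ℝ}

theorem strictMono_sub_of_strictAnti_deriv (hS : ∀ p, Differentiable ℝ (S p))
    (hanti : ∀ q, StrictAnti fun p => deriv (S p) q) {x x' : ℝ} (hx : x < x') :
    StrictMono fun q => S x q - S x' q :=
  strictMono_of_deriv_pos fun q => by
    rw [deriv_fun_sub (hS x q) (hS x' q), sub_pos]
    exact hanti q hx

theorem add_lt_add_of_crossing (hS : ∀ p, Differentiable ℝ (S p))
    (hanti : ∀ q, StrictAnti fun p => deriv (S p) q) {x x' y y' : ℝ}
    (hcross : (x - x') * (y - y') < 0) :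
    S x y' + S x' y < S x y + S x' y' := by
  rcases mul_neg_iff.mp hcross with ⟨hx, hy⟩ | ⟨hx, hy⟩
  · linarith [strictMono_sub_of_strictAnti_deriv hS hanti (sub_pos.mp hx) (sub_neg.mp hy)]
  · linarith [strictMono_sub_of_strictAnti_deriv hS hanti (sub_neg.mp hx) (sub_pos.mp hy)]

end Crossing

/-- Aubry–Le Daeron fundamental crossing lemma. -/
theorem stmt19 (S : ℝ → ℝ → ℝ)
    (hS : ContDiff ℝ 2 (Function.uncurry S))
    (hmix : ∀ p q : ℝ, deriv (fun x => deriv (fun y => S x y) q) p < 0)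
    (x x' y y' : ℝ) (hcross : (x - x') * (y - y') < 0) :
    S x y' + S x' y < S x y + S x' y' := by
  have hSy : ∀ p, Differentiable ℝ (S p) := fun p =>
    (hS.differentiable (by norm_num)).comp ((differentiable_const p).prodMk differentiable_id)
  have hanti : ∀ q, StrictAnti fun p => deriv (S p) q := fun q =>
    strictAnti_of_deriv_neg fun p => hmix p q
  exact add_lt_add_of_crossing hSy hanti hcross
end
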